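/- arXiv:0706.0192 — 2 statements merged into one kernel-verified Lean document; each statement's English description precedes it below -/
import Mathlib

section
/- For the entropy-maximizing weights $p_k$ on the interior of a polytope with vertices $a_1,\dots,a_n$, the directional derivative along the vector from $x$ toward the vertex satisfies $|p_{k(a_k - x)}(x)| \le (n+1)^{1/2}$ for every interior point $x$ and every $k$. -/
open Finset

/-- The entropy function of a polytope with vertices `a 1, …, a n`:
`U(x) = sup { ∑ᵢ ln pᵢ : pᵢ > 0, ∑ pᵢ = 1, ∑ pᵢ aᵢ = x }`. -/
noncomputable def entropyU {d n : ℕ} (a : Fin n → EuclideanSpace ℝ (Fin d))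
    (x : EuclideanSpace ℝ (Fin d)) : ℝ :=
  sSup {s | ∃ p : Fin n → ℝ, (∀ i, 0 < p i) ∧ ∑ i, p i = 1 ∧
    ∑ i, p i • a i = x ∧ s = ∑ i, Real.log (p i)}

/-!
The maximizer `q = p x` of `∑ log` on the fibre over `x` satisfies `∑ w / q = 0` for every
`w` with `∑ w = 0` and `∑ w • a = 0`. Moving `x` to `x + t • (a k - x)` changes `q` into `r`
with `w = r - q - t (e_k - q)` such a vector. Subtracting the stationarity conditions at `q` and
at `r` shows that `r - q` is orthogonal to `w` for the weights `1 / (q r)`, so by Pythagoras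
`r - q` is no longer than `t (e_k - q)` in that weighted norm. Reading off the `k`-th coordinate,
and bounding `∑ q / r ≤ n / (1 - t)` by stationarity at `r`, gives
`(r_k - q_k)² ≤ t² (1 + n / (1 - t))`; letting `t → 0⁺` bounds the square of the directional
derivative by `n + 1`.
-/

lemma sum_log_le_entropyU {d n : ℕ} (a : Fin n → EuclideanSpace ℝ (Fin d))
    (r : Fin n → ℝ) (hr : ∀ i, 0 < r i) (hr1 : ∑ i, r i = 1) :
    ∑ i, Real.log (r i) ≤ entropyU a (∑ i, r i • a i) := by
  refine le_csSup ⟨0, ?_⟩ ⟨r, hr, hr1, rfl, rfl⟩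
  rintro s ⟨p, hp, hp1, -, rfl⟩
  refine sum_nonpos fun i _ => Real.log_nonpos (hp i).le ?_
  exact hp1 ▸ single_le_sum (fun j _ => (hp j).le) (mem_univ i)

lemma sum_div_eq_zero_of_forall_sum_log_le {ι E : Type*} [Fintype ι] [AddCommGroup E]
    [Module ℝ E] (a : ι → E) (q : ι → ℝ) (hq : ∀ i, 0 < q i)
    (hmax : ∀ r : ι → ℝ, (∀ i, 0 < r i) → ∑ i, r i = ∑ i, q i →
      ∑ i, r i • a i = ∑ i, q i • a i → ∑ i, Real.log (r i) ≤ ∑ i, Real.log (q i))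
    (w : ι → ℝ) (hw : ∑ i, w i = 0) (hwa : ∑ i, w i • a i = 0) :
    ∑ i, w i / q i = 0 := by
  have hderiv :
      HasDerivAt (fun ε : ℝ => ∑ i, Real.log (q i + ε * w i)) (∑ i, w i / q i) 0 := by
    refine HasDerivAt.fun_sum fun i _ => ?_
    have hlin : HasDerivAt (fun ε : ℝ => q i + ε * w i) (w i) 0 := by
      simpa using ((hasDerivAt_id (0 : ℝ)).mul_const (w i)).const_add (q i)
    simpa using hlin.log (by simpa using (hq i).ne')
  refine IsLocalMax.hasDerivAt_eq_zero ?_ hderiv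
  have hpos : ∀ᶠ ε : ℝ in nhds 0, ∀ i, 0 < q i + ε * w i := by
    refine Filter.eventually_all.2 fun i => ?_
    have hcont : Continuous fun ε : ℝ => q i + ε * w i := by fun_prop
    exact hcont.continuousAt.eventually (eventually_gt_nhds (by simpa using hq i))
  filter_upwards [hpos] with ε hε
  have hsum : ∑ i, (q i + ε * w i) = ∑ i, q i := by
    rw [sum_add_distrib, ← mul_sum, hw, mul_zero, add_zero]
  have hbary : ∑ i, (q i + ε * w i) • a i = ∑ i, q i • a i := by
    simp only [add_smul, mul_smul, sum_add_distrib, ← smul_sum, hwa, smul_zero, add_zero]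
  simpa using hmax _ hε hsum hbary

lemma sum_mul_sq_le_of_sum_mul_sub_mul_eq_zero {ι : Type*} (s : Finset ι) (c x y : ι → ℝ)
    (hc : ∀ i ∈ s, 0 ≤ c i) (horth : ∑ i ∈ s, c i * (x i - y i) * x i = 0) :
    ∑ i ∈ s, c i * x i ^ 2 ≤ ∑ i ∈ s, c i * y i ^ 2 := by
  have hpyth : ∑ i ∈ s, c i * y i ^ 2 - ∑ i ∈ s, c i * x i ^ 2
      = ∑ i ∈ s, c i * (x i - y i) ^ 2 - 2 * ∑ i ∈ s, c i * (x i - y i) * x i := by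
    rw [mul_sum, ← sum_sub_distrib, ← sum_sub_distrib]
    exact sum_congr rfl fun i _ => by ring
  rw [horth, mul_zero, sub_zero] at hpyth
  linarith [sum_nonneg fun i hi => mul_nonneg (hc i hi) (sq_nonneg (x i - y i))]
section Fibre

variable {ι : Type*} [Fintype ι] [DecidableEq ι] {q r : ι → ℝ}

lemma sum_single_sub_sq_div_le (hq : ∀ i, 0 < q i) (hr : ∀ i, 0 < r i) (k : ι) :
    ∑ i, ((Pi.single k 1 : ι → ℝ) i - q i) ^ 2 / (q i * r i)
      ≤ 1 / (q k * r k) + ∑ i, q i / r i := by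
  have hpt : ∀ i, ((Pi.single k 1 : ι → ℝ) i - q i) ^ 2 / (q i * r i)
      ≤ (Pi.single k 1 : ι → ℝ) i / (q i * r i) + q i / r i := by
    intro i
    have := hq i; have := hr i
    have hqr : q i / r i = q i ^ 2 / (q i * r i) := by field_simp
    rw [hqr, ← add_div]
    gcongr
    rcases eq_or_ne i k with rfl | hik
    · simp only [Pi.single_eq_same]; nlinarith
    · simp [Pi.single_eq_of_ne hik]
  calc _ ≤ ∑ i, ((Pi.single k 1 : ι → ℝ) i / (q i * r i) + q i / r i) :=
        sum_le_sum fun i _ => hpt i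
    _ = 1 / (q k * r k) + ∑ i, q i / r i := by
      simp [sum_add_distrib, Pi.single_apply, ite_div]

lemma one_sub_mul_sum_div_le_card (hr : ∀ i, 0 < r i) (k : ι) {t : ℝ} (ht0 : 0 ≤ t)
    (hfocr : ∑ i, (r i - q i - t * ((Pi.single k 1 : ι → ℝ) i - q i)) / r i = 0) :
    (1 - t) * ∑ i, q i / r i ≤ Fintype.card ι := by
  have hsplit : ∀ i, (r i - q i - t * ((Pi.single k 1 : ι → ℝ) i - q i)) / r i
      = 1 - t * ((Pi.single k 1 : ι → ℝ) i / r i) - (1 - t) * (q i / r i) := by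
    intro i; have := (hr i).ne'; field_simp; ring
  rw [sum_congr rfl fun i _ => hsplit i, sum_sub_distrib, sum_sub_distrib, ← mul_sum,
    ← mul_sum] at hfocr
  simp only [sum_const, card_univ, nsmul_eq_mul, mul_one, Pi.single_apply, ite_div, zero_div,
    sum_ite_eq', mem_univ, if_true] at hfocr
  have := hr k
  have : 0 ≤ t * (1 / r k) := by positivity
  linarith

lemma sq_sub_le_of_sum_div_eq_zero (hq : ∀ i, 0 < q i) (hr : ∀ i, 0 < r i)
    (hq1 : ∑ i, q i = 1) (hr1 : ∑ i, r i = 1) (k : ι) {t : ℝ} (ht0 : 0 ≤ t) (ht1 : t < 1)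
    (hfocq : ∑ i, (r i - q i - t * ((Pi.single k 1 : ι → ℝ) i - q i)) / q i = 0)
    (hfocr : ∑ i, (r i - q i - t * ((Pi.single k 1 : ι → ℝ) i - q i)) / r i = 0) :
    (r k - q k) ^ 2 ≤ t ^ 2 * (1 + Fintype.card ι / (1 - t)) := by
  set e : ι → ℝ := fun i => (Pi.single k 1 : ι → ℝ) i - q i
  set c : ι → ℝ := fun i => 1 / (q i * r i)
  have hc : ∀ i, 0 < c i := fun i => by have := hq i; have := hr i; positivity
  -- the difference of the two stationarity conditions
  have horth : ∑ i, c i * ((r i - q i) - t * e i) * (r i - q i) = 0 := by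
    rw [← sub_self (0 : ℝ)]
    nth_rewrite 1 [← hfocq]
    rw [← hfocr, ← sum_sub_distrib]
    refine sum_congr rfl fun i _ => ?_
    have := (hq i).ne'; have := (hr i).ne'
    simp only [c, e]
    field_simp
  have hproj := sum_mul_sq_le_of_sum_mul_sub_mul_eq_zero univ c _ _ (fun i _ => (hc i).le) horth
  have hk : c k * (r k - q k) ^ 2 ≤ ∑ i, c i * (r i - q i) ^ 2 :=
    single_le_sum (f := fun i => c i * (r i - q i) ^ 2)
      (fun i _ => mul_nonneg (hc i).le (sq_nonneg _)) (mem_univ k)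
  have he : ∑ i, c i * (t * e i) ^ 2 ≤ t ^ 2 * (c k + ∑ i, q i / r i) := by
    simp only [mul_pow, mul_left_comm _ (t ^ 2), ← mul_sum, c, one_div_mul_eq_div]
    exact mul_le_mul_of_nonneg_left (sum_single_sub_sq_div_le hq hr k) (sq_nonneg t)
  have hS0 : 0 ≤ ∑ i, q i / r i := sum_nonneg fun i _ => (div_pos (hq i) (hr i)).le
  have hS : ∑ i, q i / r i ≤ Fintype.card ι / (1 - t) := by
    rw [le_div_iff₀ (by linarith), mul_comm]
    exact one_sub_mul_sum_div_le_card hr k ht0 hfocr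
  have hqk : q k ≤ 1 := hq1 ▸ single_le_sum (fun i _ => (hq i).le) (mem_univ k)
  have hrk : r k ≤ 1 := hr1 ▸ single_le_sum (fun i _ => (hr i).le) (mem_univ k)
  have hqrk : 0 < q k * r k := mul_pos (hq k) (hr k)
  have hck : c k * (q k * r k) = 1 := one_div_mul_cancel hqrk.ne'
  calc (r k - q k) ^ 2 = (q k * r k) * (c k * (r k - q k) ^ 2) := by
        rw [← mul_assoc, mul_comm _ (c k), hck, one_mul]
    _ ≤ (q k * r k) * (t ^ 2 * (c k + ∑ i, q i / r i)) :=
        mul_le_mul_of_nonneg_left (by linarith) hqrk.le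
    _ = t ^ 2 * (1 + (q k * r k) * ∑ i, q i / r i) := by rw [← hck]; ring
    _ ≤ t ^ 2 * (1 + ∑ i, q i / r i) := by
        gcongr; exact mul_le_of_le_one_left hS0 (mul_le_one₀ hqk (hr k).le hrk)
    _ ≤ t ^ 2 * (1 + Fintype.card ι / (1 - t)) := by gcongr

end Fibre

lemma sq_sub_le_of_add_smul_mem {ι E : Type*} [Fintype ι] [AddCommGroup E] [Module ℝ E]
    (a : ι → E) (U : Set E) (p : E → ι → ℝ)
    (hp : ∀ y ∈ U, (∀ i, 0 < p y i) ∧ ∑ i, p y i = 1 ∧ ∑ i, p y i • a i = y)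
    (hfoc : ∀ y ∈ U, ∀ w : ι → ℝ, ∑ i, w i = 0 → ∑ i, w i • a i = 0 →
      ∑ i, w i / p y i = 0)
    {x : E} (hx : x ∈ U) (k : ι) {t : ℝ} (ht0 : 0 ≤ t) (ht1 : t < 1)
    (hxt : x + t • (a k - x) ∈ U) :
    (p (x + t • (a k - x)) k - p x k) ^ 2 ≤ t ^ 2 * (1 + Fintype.card ι / (1 - t)) := by
  classical
  obtain ⟨hq, hq1, hqa⟩ := hp x hx
  obtain ⟨hr, hr1, hra⟩ := hp _ hxt
  set q := p x
  set r := p (x + t • (a k - x))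
  set w : ι → ℝ := fun i => r i - q i - t * ((Pi.single k 1 : ι → ℝ) i - q i)
  have hw : ∑ i, w i = 0 := by
    simp only [w, sum_sub_distrib, ← mul_sum, hq1, hr1, sum_pi_single', mem_univ, if_true]
    ring
  have hwa : ∑ i, w i • a i = 0 := by
    have hsingle : ∑ i, (Pi.single k 1 : ι → ℝ) i • a i = a k := by
      simp [Pi.single_apply]
    simp only [w, sub_smul, mul_smul, sum_sub_distrib, ← smul_sum, hsingle, hqa, hra]
    module
  exact sq_sub_le_of_sum_div_eq_zero hq hr hq1 hr1 k ht0 ht1 (hfoc x hx w hw hwa)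
    (hfoc _ hxt w hw hwa)

open Filter Topology in
theorem abs_fderiv_apply_sub_le_sqrt {ι E : Type*} [Fintype ι] [NormedAddCommGroup E]
    [NormedSpace ℝ E] (a : ι → E) {U : Set E} (hU : IsOpen U) (p : E → ι → ℝ)
    (hp : ∀ y ∈ U, (∀ i, 0 < p y i) ∧ ∑ i, p y i = 1 ∧ ∑ i, p y i • a i = y)
    (hfoc : ∀ y ∈ U, ∀ w : ι → ℝ, ∑ i, w i = 0 → ∑ i, w i • a i = 0 →
      ∑ i, w i / p y i = 0)
    {x : E} (hx : x ∈ U) (k : ι) :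
    |fderiv ℝ (fun y => p y k) x (a k - x)| ≤ √(Fintype.card ι + 1) := by
  by_cases hdiff : DifferentiableAt ℝ (fun y => p y k) x
  swap
  · simp [fderiv_zero_of_not_differentiableAt hdiff]
  set L := fderiv ℝ (fun y => p y k) x (a k - x)
  set γ : ℝ → E := fun t => x + t • (a k - x)
  have hγ : HasDerivAt γ (a k - x) 0 := by
    have := ((hasDerivAt_id (0 : ℝ)).smul_const (a k - x)).const_add x
    rwa [one_smul] at this
  have hγ0 : γ 0 = x := by simp [γ]
  have hderiv : HasDerivAt (fun t => p (γ t) k) L 0 :=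
    hdiff.hasFDerivAt.comp_hasDerivAt_of_eq 0 hγ hγ0.symm
  have hslope : Tendsto (slope (fun t => p (γ t) k) 0) (𝓝[>] 0) (𝓝 L) :=
    (hasDerivAt_iff_tendsto_slope.1 hderiv).mono_left (nhdsGT_le_nhdsNE 0)
  have hbound : Tendsto (fun t : ℝ => 1 + Fintype.card ι / (1 - t)) (𝓝[>] 0)
      (𝓝 (1 + Fintype.card ι)) := by
    have hcont : ContinuousAt (fun t : ℝ => 1 + Fintype.card ι / (1 - t)) 0 :=
      ContinuousAt.add continuousAt_const
        (continuousAt_const.div (continuousAt_const.sub continuousAt_id) (by norm_num))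
    simpa using hcont.tendsto.mono_left nhdsWithin_le_nhds
  have hnear : ∀ᶠ t in 𝓝[>] (0 : ℝ), t < 1 ∧ γ t ∈ U := by
    refine ((eventually_lt_nhds one_pos).and ?_).filter_mono nhdsWithin_le_nhds
    exact hγ.continuousAt.eventually (hγ0 ▸ hU.eventually_mem hx)
  have hsq : ∀ᶠ t in 𝓝[>] (0 : ℝ),
      slope (fun t => p (γ t) k) 0 t ^ 2 ≤ 1 + Fintype.card ι / (1 - t) := by
    filter_upwards [hnear, self_mem_nhdsWithin] with t ⟨ht1, htU⟩ (ht0 : 0 < t)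
    rw [slope_def_field, hγ0, sub_zero, div_pow, div_le_iff₀ (by positivity), mul_comm]
    exact sq_sub_le_of_add_smul_mem a U p hp hfoc hx k ht0.le ht1 htU
  refine Real.abs_le_sqrt ?_
  rw [add_comm]
  exact le_of_tendsto_of_tendsto (hslope.pow 2) hbound hsq

theorem stmt_14_general {d n : ℕ} (a : Fin n → EuclideanSpace ℝ (Fin d))
    (P : Set (EuclideanSpace ℝ (Fin d)))
    (p : EuclideanSpace ℝ (Fin d) → Fin n → ℝ)
    (hp : ∀ x ∈ interior P, (∀ i, 0 < p x i) ∧ ∑ i, p x i = 1 ∧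
      ∑ i, p x i • a i = x ∧ ∑ i, Real.log (p x i) = entropyU a x) :
    ∀ x ∈ interior P, ∀ k,
      |fderiv ℝ (fun y => p y k) x (a k - x)| ≤ Real.sqrt ((n : ℝ) + 1) := by
  have hfoc : ∀ y ∈ interior P, ∀ w : Fin n → ℝ, ∑ i, w i = 0 → ∑ i, w i • a i = 0 →
      ∑ i, w i / p y i = 0 := by
    intro y hy
    obtain ⟨hq, hq1, hqa, hU⟩ := hp y hy
    refine sum_div_eq_zero_of_forall_sum_log_le a (p y) hq fun r hr hr1 hra => ?_
    rw [hU, ← hqa, ← hra]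
    exact sum_log_le_entropyU a r hr (hr1.trans hq1)
  intro x hx k
  simpa using abs_fderiv_apply_sub_le_sqrt a isOpen_interior p
    (fun y hy => (hp y hy).imp_right fun h => ⟨h.1, h.2.1⟩) hfoc hx k

/-- `|p_{k(aₖ - x)}(x)| ≤ (n+1)^{1/2}` for every interior point `x` and every `k`. -/
theorem stmt_14 {d n : ℕ} (hn : 2 ≤ n) (a : Fin n → EuclideanSpace ℝ (Fin d))
    (ha : Function.Injective a)
    (P : Set (EuclideanSpace ℝ (Fin d)))
    (hP : P = convexHull ℝ (Set.range a))
    (hvert : ∀ i, a i ∈ Set.extremePoints ℝ P)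
    (hint : (interior P).Nonempty)
    (p : EuclideanSpace ℝ (Fin d) → Fin n → ℝ)
    (hp : ∀ x ∈ interior P, (∀ i, 0 < p x i) ∧ ∑ i, p x i = 1 ∧
      ∑ i, p x i • a i = x ∧ ∑ i, Real.log (p x i) = entropyU a x) :
    ∀ x ∈ interior P, ∀ k,
      |fderiv ℝ (fun y => p y k) x (a k - x)| ≤ Real.sqrt ((n : ℝ) + 1) :=
  stmt_14_general a P p hp
end

section
/- Let $p_k$ be the entropy-maximizing weights on the interior $P^o$ of a polytope with vertices $a_1,\dots,a_n$, and for $\xi\ne0$ let $d(x,\xi)$ be the distance from $x\in P^o$ to $\partial P$ along the ray $x+t\xi/|\xi|$, $t\ge0$. Then for every $x\in P^o$ and every $k$, $p_k(x) \ge d(x, x-a_k) / \big(n\, d(x,x-a_k) + n |x-a_k|\big)$. -/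
open Finset

/-- The distance from `x` to the boundary of `P` along the ray `x + t ξ/‖ξ‖`, `t ≥ 0`:
the supremum of those `t ≥ 0` for which the point of the ray at distance `t` is in `P`. -/
noncomputable def rayDist {d : ℕ} (P : Set (EuclideanSpace ℝ (Fin d)))
    (x ξ : EuclideanSpace ℝ (Fin d)) : ℝ :=
  sSup {t : ℝ | 0 ≤ t ∧ x + (t * ‖ξ‖⁻¹) • ξ ∈ P}

/-!
If `p` maximizes `∑ log pᵢ` among the positive barycentric weights of `x` and `r` is any
nonnegative weight vector of `x`, then `q = (1 - θ) p + θ r` is admissible for `θ ∈ (0, 1)`, and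
`log (q/p) ≥ 1 - p/q` gives `∑ (rᵢ - pᵢ)/qᵢ ≤ 0`; letting `θ → 0` yields `∑ rᵢ/pᵢ ≤ n`.
If `y = x + s (x - aₖ)` lies in `P`, then `x = (y + s aₖ)/(1 + s)` has weights with
`rₖ ≥ s/(1 + s)`, hence `s/(1 + s) ≤ n pₖ`. Rescaling `s = t/|x - aₖ|` and passing to the
supremum over the ray gives `d ≤ n pₖ (|x - aₖ| + d)`, which is the claim.
-/

open Filter

section Weights

variable {ι E : Type*} [Fintype ι] [AddCommGroup E] [Module ℝ E]

lemma exists_mem_stdSimplex_of_mem_convexHull_range {a : ι → E} {y : E}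
    (hy : y ∈ convexHull ℝ (Set.range a)) :
    ∃ w ∈ stdSimplex ℝ ι, ∑ i, w i • a i = y := by
  classical
  have hrange :
      Set.range a = Fintype.linearCombination ℝ a '' Set.range (fun i => Pi.single i 1) := by
    rw [← Set.range_comp]
    congr 1
    ext i
    simp
  rw [hrange, ← LinearMap.image_convexHull, convexHull_rangle_single_eq_stdSimplex] at hy
  simpa [Fintype.linearCombination_apply] using hy

lemma exists_mem_stdSimplex_le_apply {a : ι → E} {y : E}
    (hy : y ∈ convexHull ℝ (Set.range a)) (k : ι) {μ : ℝ} (hμ₀ : 0 ≤ μ) (hμ₁ : μ ≤ 1) :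
    ∃ r ∈ stdSimplex ℝ ι, ∑ i, r i • a i = (1 - μ) • y + μ • a k ∧ μ ≤ r k := by
  classical
  obtain ⟨w, hw, rfl⟩ := exists_mem_stdSimplex_of_mem_convexHull_range hy
  refine ⟨(1 - μ) • w + μ • Pi.single k 1,
    convex_stdSimplex ℝ ι hw (single_mem_stdSimplex ℝ k) (by linarith) hμ₀ (by ring), ?_, ?_⟩
  · simp [add_smul, mul_smul, sum_add_distrib, smul_sum, Pi.single_apply]
  · simpa using mul_nonneg (sub_nonneg.2 hμ₁) (hw.1 k)

lemma sum_div_le_card_of_forall_sum_log_le {p r : ι → ℝ} (hp : ∀ i, 0 < p i)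
    (hr : ∀ i, 0 ≤ r i)
    (h : ∀ θ ∈ Set.Ioo (0 : ℝ) 1,
      ∑ i, Real.log ((1 - θ) * p i + θ * r i) ≤ ∑ i, Real.log (p i)) :
    ∑ i, r i / p i ≤ Fintype.card ι := by
  set q : ℝ → ι → ℝ := fun θ i => (1 - θ) * p i + θ * r i
  have hq : ∀ θ ∈ Set.Ico (0 : ℝ) 1, ∀ i, 0 < q θ i := fun θ hθ i =>
    add_pos_of_pos_of_nonneg (mul_pos (sub_pos.2 hθ.2) (hp i)) (mul_nonneg hθ.1 (hr i))
  have hneg : ∀ θ ∈ Set.Ioo (0 : ℝ) 1, ∑ i, (r i - p i) / q θ i ≤ 0 := by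
    intro θ hθ
    have hlog : ∀ i, θ * ((r i - p i) / q θ i) ≤ Real.log (q θ i) - Real.log (p i) := by
      intro i
      have hqi := hq θ (Set.Ioo_subset_Ico_self hθ) i
      rw [← Real.log_div hqi.ne' (hp i).ne']
      convert Real.one_sub_inv_le_log_of_pos (div_pos hqi (hp i)) using 1
      field_simp
      simp only [q]; ring
    refine nonpos_of_mul_nonpos_right ?_ hθ.1
    calc θ * ∑ i, (r i - p i) / q θ i
        = ∑ i, θ * ((r i - p i) / q θ i) := mul_sum _ _ _
      _ ≤ ∑ i, (Real.log (q θ i) - Real.log (p i)) := sum_le_sum fun i _ => hlog i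
      _ = ∑ i, Real.log (q θ i) - ∑ i, Real.log (p i) := sum_sub_distrib _ _
      _ ≤ 0 := sub_nonpos.2 (h θ hθ)
  have hcont : ContinuousAt (fun θ => ∑ i, (r i - p i) / q θ i) 0 := by
    have hq0 : ∀ i, q 0 i ≠ 0 := fun i => (hq 0 ⟨le_rfl, one_pos⟩ i).ne'
    simp only [q] at hq0 ⊢
    fun_prop (disch := exact hq0 _)
  have hlim : ∑ i, (r i - p i) / q 0 i ≤ 0 :=
    le_of_tendsto (hcont.tendsto.mono_left nhdsWithin_le_nhds)
      (eventually_of_mem (Ioo_mem_nhdsGT one_pos) hneg)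
  simpa [q, sub_div, div_self (hp _).ne', sum_sub_distrib] using hlim

end Weights

section Entropy

variable {d n : ℕ} (a : Fin n → EuclideanSpace ℝ (Fin d)) (x : EuclideanSpace ℝ (Fin d))

def IsEntropyMaximizer (p : Fin n → ℝ) : Prop :=
  (∀ i, 0 < p i) ∧ ∑ i, p i = 1 ∧ ∑ i, p i • a i = x ∧ ∑ i, Real.log (p i) = entropyU a x

variable {a x}

lemma sum_log_le_entropyU_s18 {q : Fin n → ℝ} (hq₀ : ∀ i, 0 < q i) (hq₁ : ∑ i, q i = 1)
    (hqa : ∑ i, q i • a i = x) : ∑ i, Real.log (q i) ≤ entropyU a x := by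
  refine le_csSup ⟨0, ?_⟩ ⟨q, hq₀, hq₁, hqa, rfl⟩
  rintro _ ⟨q', hq'₀, hq'₁, -, rfl⟩
  refine sum_nonpos fun i _ => Real.log_nonpos (hq'₀ i).le ?_
  exact hq'₁ ▸ single_le_sum (fun j _ => (hq'₀ j).le) (mem_univ i)

lemma IsEntropyMaximizer.sum_div_le_card {p r : Fin n → ℝ} (hp : IsEntropyMaximizer a x p)
    (hr : r ∈ stdSimplex ℝ (Fin n)) (hra : ∑ i, r i • a i = x) :
    ∑ i, r i / p i ≤ n := by
  obtain ⟨hp₀, hp₁, hpa, hpU⟩ := hp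
  refine (sum_div_le_card_of_forall_sum_log_le hp₀ hr.1 fun θ hθ => ?_).trans_eq (by simp)
  rw [hpU]
  apply sum_log_le_entropyU_s18
  · exact fun i => add_pos_of_pos_of_nonneg (mul_pos (sub_pos.2 hθ.2) (hp₀ i))
      (mul_nonneg hθ.1.le (hr.1 i))
  · simp [sum_add_distrib, ← mul_sum, hp₁, hr.2]
  · simp only [add_smul, mul_smul, sum_add_distrib, ← smul_sum, hpa, hra]
    rw [← add_smul, sub_add_cancel, one_smul]

lemma IsEntropyMaximizer.div_one_add_le_card_mul {p : Fin n → ℝ}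
    (hp : IsEntropyMaximizer a x p) (k : Fin n) {s : ℝ} (hs : 0 ≤ s)
    (hy : x + s • (x - a k) ∈ convexHull ℝ (Set.range a)) :
    s / (1 + s) ≤ n * p k := by
  obtain ⟨r, hr, hra, hrk⟩ := exists_mem_stdSimplex_le_apply hy k (μ := s / (1 + s))
    (by positivity) (div_le_one_of_le₀ (by linarith) (by linarith))
  have hrx : ∑ i, r i • a i = x := by
    rw [hra]
    match_scalars <;> field_simp <;> ring
  have hk : r k / p k ≤ n :=
    (single_le_sum (fun i _ => div_nonneg (hr.1 i) (hp.1 i).le) (mem_univ k)).trans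
      (hp.sum_div_le_card hr hrx)
  exact hrk.trans ((div_le_iff₀ (hp.1 k)).1 hk)

end Entropy

section RayDist

variable {d : ℕ} {P : Set (EuclideanSpace ℝ (Fin d))} {x ξ : EuclideanSpace ℝ (Fin d)}

lemma rayDist_nonneg : 0 ≤ rayDist P x ξ :=
  Real.sSup_nonneg fun _ ht => ht.1

lemma rayDist_zero_right : rayDist P x 0 = 0 := by
  by_cases hx : x ∈ P
  · simp only [rayDist, smul_zero, add_zero, hx, and_true]
    exact Real.sSup_of_not_bddAbove (not_bddAbove_Ici 0)
  · simp [rayDist, hx]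

lemma rayDist_le_mul_add {m : ℝ} (hm : 0 ≤ m) (hx : x ∈ P)
    (h : ∀ s, 0 ≤ s → x + s • ξ ∈ P → s / (1 + s) ≤ m) :
    rayDist P x ξ ≤ m * (‖ξ‖ + rayDist P x ξ) := by
  rcases eq_or_ne ξ 0 with rfl | hξ
  · simp [rayDist_zero_right]
  have hξ' : 0 < ‖ξ‖ := norm_pos_iff.2 hξ
  by_cases hS : BddAbove {t : ℝ | 0 ≤ t ∧ x + (t * ‖ξ‖⁻¹) • ξ ∈ P}
  swap
  · rw [rayDist, Real.sSup_of_not_bddAbove hS]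
    simpa using mul_nonneg hm hξ'.le
  have hC : IsClosed {t : ℝ | t ≤ m * (‖ξ‖ + t)} := isClosed_le continuous_id (by fun_prop)
  refine hC.closure_subset_iff.2 ?_ (csSup_mem_closure ⟨0, le_rfl, by simpa using hx⟩ hS)
  rintro t ⟨ht, hmem⟩
  have hs := h (t * ‖ξ‖⁻¹) (by positivity) hmem
  rw [div_le_iff₀ (by positivity)] at hs
  calc t = t * ‖ξ‖⁻¹ * ‖ξ‖ := by field_simp
    _ ≤ m * (1 + t * ‖ξ‖⁻¹) * ‖ξ‖ := by gcongr
    _ = m * (‖ξ‖ + t) := by field_simp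

end RayDist

theorem stmt_18_general {d n : ℕ} (a : Fin n → EuclideanSpace ℝ (Fin d))
    (P : Set (EuclideanSpace ℝ (Fin d)))
    (hP : P = convexHull ℝ (Set.range a))
    (p : EuclideanSpace ℝ (Fin d) → Fin n → ℝ)
    (hp : ∀ x ∈ interior P, (∀ i, 0 < p x i) ∧ ∑ i, p x i = 1 ∧
      ∑ i, p x i • a i = x ∧ ∑ i, Real.log (p x i) = entropyU a x) :
    ∀ x ∈ interior P, ∀ k,
      p x k ≥ rayDist P x (x - a k)
        / ((n : ℝ) * rayDist P x (x - a k) + (n : ℝ) * ‖x - a k‖) := by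
  subst hP
  intro x hx k
  have hmax : IsEntropyMaximizer a x (p x) := hp x hx
  have hD := rayDist_le_mul_add (mul_nonneg n.cast_nonneg (hmax.1 k).le) (interior_subset hx)
    fun _ hs hy => hmax.div_one_add_le_card_mul k hs hy
  exact div_le_of_le_mul₀ (add_nonneg (mul_nonneg n.cast_nonneg rayDist_nonneg) (by positivity))
    (hmax.1 k).le (by linear_combination hD)

/-- Lower bound for the entropy-maximizing weights:
`pₖ(x) ≥ d(x, x-aₖ) / (n d(x, x-aₖ) + n |x-aₖ|)`. -/
theorem stmt_18 {d n : ℕ} (hn : 2 ≤ n) (a : Fin n → EuclideanSpace ℝ (Fin d))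
    (ha : Function.Injective a)
    (P : Set (EuclideanSpace ℝ (Fin d)))
    (hP : P = convexHull ℝ (Set.range a))
    (hvert : ∀ i, a i ∈ Set.extremePoints ℝ P)
    (hint : (interior P).Nonempty)
    (p : EuclideanSpace ℝ (Fin d) → Fin n → ℝ)
    (hp : ∀ x ∈ interior P, (∀ i, 0 < p x i) ∧ ∑ i, p x i = 1 ∧
      ∑ i, p x i • a i = x ∧ ∑ i, Real.log (p x i) = entropyU a x) :
    ∀ x ∈ interior P, ∀ k,
      p x k ≥ rayDist P x (x - a k)
        / ((n : ℝ) * rayDist P x (x - a k) + (n : ℝ) * ‖x - a k‖) :=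
  stmt_18_general a P hP p hp
end
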